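/- Majority-vote / probe budget lemma: under the product model with informative prevalence ρ and noise ε < 1/2, any classifier whose output is a function only of statistics invariant under the background-permutation group achieves the same accuracy before and after any background shift; in particular the optimal shift-invariant classifier attains accuracy ρ(1−ε) + (1−ρ)/2 both in-distribution and OOD. -/

import Mathlib

/-! Shifting the background marginal by `σ` only relabels the summation over `B`, so it has the
same effect as precomposing the classifier with `σ`, which does not change a classifier that ignores
the background.  Independently, for every `(b, r)` the informative term is largest when the
prediction is `h r` (because `ε ≤ 1 - ε`), so predicting `h r` is optimal for every background
marginal. -/

/-- Accuracy under the mixture model: with probability `ρ` the example is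
informative with label `h r` observed through flip-noise `ε`; with probability
`1-ρ` the label is an independent fair coin. -/
noncomputable def mixAcc {B R : Type*} [Fintype B] [Fintype R]
    (μB : B → ℝ) (μR : R → ℝ) (h : R → Bool) (ρ ε : ℝ) (c : B × R → Bool) : ℝ :=
  ∑ b, ∑ r, μB b * μR r *
    (ρ * (if c (b, r) = h r then 1 - ε else ε) + (1 - ρ) * (1/2))

section MixtureAccuracy

variable {B R : Type*} [Fintype B] [Fintype R] {μB : B → ℝ} {μR : R → ℝ} {h : R → Bool} {ρ ε : ℝ}

theorem mixAcc_comp_symm (c : B × R → Bool) (σ : B ≃ B) :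
    mixAcc (fun b => μB (σ.symm b)) μR h ρ ε c = mixAcc μB μR h ρ ε (fun x => c (σ x.1, x.2)) := by
  rw [mixAcc, ← Equiv.sum_comp σ]
  simp only [Equiv.symm_apply_apply, mixAcc]

theorem mixAcc_comp_symm_of_forall_eq {c : B × R → Bool} (hc : ∀ b b' r, c (b, r) = c (b', r))
    (σ : B ≃ B) :
    mixAcc (fun b => μB (σ.symm b)) μR h ρ ε c = mixAcc μB μR h ρ ε c := by
  rw [mixAcc_comp_symm]
  congr 1
  funext x
  exact hc _ _ _

theorem mixAcc_label :
    mixAcc μB μR h ρ ε (fun x => h x.2) =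
      (∑ b, μB b) * (∑ r, μR r) * (ρ * (1 - ε) + (1 - ρ) * (1/2)) := by
  simp only [mixAcc, if_true]
  rw [Finset.sum_mul_sum, Finset.sum_mul]
  simp only [Finset.sum_mul]

theorem mixAcc_le_mixAcc_label (hμB : ∀ b, 0 ≤ μB b) (hμR : ∀ r, 0 ≤ μR r) (hρ : 0 ≤ ρ)
    (hε : ε ≤ 1/2) (c : B × R → Bool) :
    mixAcc μB μR h ρ ε c ≤ mixAcc μB μR h ρ ε (fun x => h x.2) := by
  unfold mixAcc
  gcongr with b _ r _
  · exact mul_nonneg (hμB b) (hμR r)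
  · simp only [if_true]
    split_ifs <;> linarith

end MixtureAccuracy

theorem stmt15_general {B R : Type*} [Fintype B] [Fintype R]
    (μB : B → ℝ) (μR : R → ℝ)
    (hμB0 : ∀ b, 0 ≤ μB b) (hμB1 : ∑ b, μB b = 1)
    (hμR0 : ∀ r, 0 ≤ μR r) (hμR1 : ∑ r, μR r = 1)
    (h : R → Bool) (ρ ε : ℝ)
    (hρ0 : 0 ≤ ρ) (hε : ε < 1/2) :
    (∀ c : B × R → Bool, (∀ b b' r, c (b, r) = c (b', r)) →
      ∀ σ : B ≃ B,
        mixAcc (fun b => μB (σ.symm b)) μR h ρ ε c = mixAcc μB μR h ρ ε c) ∧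
    mixAcc μB μR h ρ ε (fun x => h x.2) = ρ * (1 - ε) + (1 - ρ) * (1/2) ∧
    (∀ c : B × R → Bool, (∀ b b' r, c (b, r) = c (b', r)) →
      ∀ σ : B ≃ B,
        mixAcc (fun b => μB (σ.symm b)) μR h ρ ε c ≤
          ρ * (1 - ε) + (1 - ρ) * (1/2)) := by
  refine ⟨fun c hc σ => mixAcc_comp_symm_of_forall_eq hc σ, ?_, fun c _ σ => ?_⟩
  · rw [mixAcc_label, hμB1, hμR1, one_mul, one_mul]
  · have hσ : ∑ b, μB (σ.symm b) = 1 := (Equiv.sum_comp σ.symm μB).trans hμB1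
    calc mixAcc (fun b => μB (σ.symm b)) μR h ρ ε c
        ≤ mixAcc (fun b => μB (σ.symm b)) μR h ρ ε (fun x => h x.2) :=
          mixAcc_le_mixAcc_label (fun b => hμB0 _) hμR0 hρ0 hε.le c
      _ = ρ * (1 - ε) + (1 - ρ) * (1/2) := by rw [mixAcc_label, hσ, hμR1, one_mul, one_mul]

/-- Majority-vote / probe budget lemma: any classifier factoring through the
`R`-coordinate (invariant under the background-permutation group) has the same
accuracy after any background shift; the classifier predicting `h r` attains
`ρ(1-ε) + (1-ρ)/2`, and no shift-invariant classifier exceeds that value,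
in-distribution or OOD. -/
theorem stmt15 {B R : Type*} [Fintype B] [Fintype R] [Nonempty B] [Nonempty R]
    (μB : B → ℝ) (μR : R → ℝ)
    (hμB0 : ∀ b, 0 ≤ μB b) (hμB1 : ∑ b, μB b = 1)
    (hμR0 : ∀ r, 0 ≤ μR r) (hμR1 : ∑ r, μR r = 1)
    (h : R → Bool) (ρ ε : ℝ)
    (hρ0 : 0 ≤ ρ) (hρ1 : ρ ≤ 1) (hε0 : 0 ≤ ε) (hε : ε < 1/2) :
    (∀ c : B × R → Bool, (∀ b b' r, c (b, r) = c (b', r)) →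
      ∀ σ : B ≃ B,
        mixAcc (fun b => μB (σ.symm b)) μR h ρ ε c = mixAcc μB μR h ρ ε c) ∧
    mixAcc μB μR h ρ ε (fun x => h x.2) = ρ * (1 - ε) + (1 - ρ) * (1/2) ∧
    (∀ c : B × R → Bool, (∀ b b' r, c (b, r) = c (b', r)) →
      ∀ σ : B ≃ B,
        mixAcc (fun b => μB (σ.symm b)) μR h ρ ε c ≤
          ρ * (1 - ε) + (1 - ρ) * (1/2)) :=
  stmt15_general μB μR hμB0 hμB1 hμR0 hμR1 h ρ ε hρ0 hε
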